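/- Let Φ be a quantum channel from d_A×d_A to d_B×d_B complex matrices with Choi state J(Φ), and let k ≥ 1. Define SDP₁(Φ,k) as the supremum of (d_A/k) Σ_{i=1}^k tr( J(Φ) W^{(i,i)} ) over all families { W^{(i,j)} : i, j ∈ [k] } of positive semidefinite matrices on ℂ^{d_A} ⊗ ℂ^{d_B} satisfying: (1) Σ_{i,j} tr(W^{(i,j)}) = k·d_B; (2) for every i ∈ [k], Σ_{j=1}^k W^{(i,j)} = ( Σ_{j=1}^k tr_B(W^{(i,j)}) ) ⊗ (I_{d_B}/d_B), where tr_B is the partial trace over the second factor; (3) for all i, j ∈ [k], tr_A(W^{(i,j)}) = (1/k) Σ_{l=1}^k tr_A(W^{(l,j)}), where tr_A is the partial trace over the first factor. Then P_succ(Φ,k) ≤ SDP₁(Φ,k). -/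

import Mathlib

open Matrix Kronecker BigOperators
open scoped ComplexOrder

noncomputable section

/-- The trace norm (sum of singular values) of a complex matrix: `tr √(AᴴA)`. -/
def traceNorm {m n : Type*} [Fintype m] [Fintype n] [DecidableEq n] (A : Matrix m n ℂ) : ℝ :=
  (((Matrix.posSemidef_conjTranspose_mul_self A).1.eigenvectorUnitary : Matrix n n ℂ) *
    Matrix.diagonal (((↑) : ℝ → ℂ) ∘ Real.sqrt ∘
      (Matrix.posSemidef_conjTranspose_mul_self A).1.eigenvalues) *
    (star (Matrix.posSemidef_conjTranspose_mul_self A).1.eigenvectorUnitary : Matrix n n ℂ)).trace.re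

/-- A density matrix: positive semidefinite with trace one. -/
def IsDensity {n : Type*} [Fintype n] [DecidableEq n] (ρ : Matrix n n ℂ) : Prop :=
  ρ.PosSemidef ∧ ρ.trace = 1

/-- Trace norm contraction coefficient of a map on matrices. -/
def etaTr {dA dB : ℕ} (Φ : Matrix (Fin dA) (Fin dA) ℂ → Matrix (Fin dB) (Fin dB) ℂ) : ℝ :=
  sSup {r : ℝ | ∃ ρ σ : Matrix (Fin dA) (Fin dA) ℂ, IsDensity ρ ∧ IsDensity σ ∧ ρ ≠ σ ∧
    r = traceNorm (Φ ρ - Φ σ) / traceNorm (ρ - σ)}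

/-- Optimal success probability for transmitting one of `k` messages through `Φ`. -/
def Psucc {dA dB : ℕ} (Φ : Matrix (Fin dA) (Fin dA) ℂ → Matrix (Fin dB) (Fin dB) ℂ)
    (k : ℕ) : ℝ :=
  sSup {r : ℝ | ∃ (M : Fin k → Matrix (Fin dB) (Fin dB) ℂ)
      (ρ : Fin k → Matrix (Fin dA) (Fin dA) ℂ),
    (∀ i, (M i).PosSemidef) ∧ (∑ i, M i = 1) ∧ (∀ i, IsDensity (ρ i)) ∧
    r = (1 / (k : ℝ)) * ∑ i, ((M i * Φ (ρ i)).trace).re}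

/-- The Euclidean (ℓ₂) norm of a complex vector. -/
def l2norm {n : Type*} [Fintype n] (v : n → ℂ) : ℝ :=
  Real.sqrt (∑ i, ‖v i‖ ^ 2)

/-- Choi state of a map on matrices: `(1/dA) ∑ᵢⱼ Eᵢⱼ ⊗ Φ(Eᵢⱼ)`. -/
def choi {dA dB : ℕ} (Φ : Matrix (Fin dA) (Fin dA) ℂ → Matrix (Fin dB) (Fin dB) ℂ) :
    Matrix (Fin dA × Fin dB) (Fin dA × Fin dB) ℂ :=
  (dA : ℂ)⁻¹ • ∑ i : Fin dA, ∑ j : Fin dA,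
    (Matrix.single i j (1 : ℂ)) ⊗ₖ (Φ (Matrix.single i j (1 : ℂ)))

/-- Partial trace over the first tensor factor. -/
def ptraceFst {m n : Type*} [Fintype m] (W : Matrix (m × n) (m × n) ℂ) : Matrix n n ℂ :=
  Matrix.of fun b b' => ∑ a, W (a, b) (a, b')

/-- Partial trace over the second tensor factor. -/
def ptraceSnd {m n : Type*} [Fintype n] (W : Matrix (m × n) (m × n) ℂ) : Matrix m m ℂ :=
  Matrix.of fun a a' => ∑ b, W (a, b) (a', b)


/-!
A code `(ρᵢ, Mᵢ)` gives the product point `W⁽ⁱʲ⁾ = ρᵢᵀ ⊗ Mⱼ` of the SDP, with the same value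
because `tr (J(Φ) (ρᵀ ⊗ M)) = tr (M Φ(ρ)) / d_A`. The SDP values are bounded above, since the
entries of a positive semidefinite matrix are bounded by its trace, and nonnegative, since the
Choi matrix of a map in Kraus form is positive semidefinite.
-/

namespace Matrix

variable {n : Type*}

lemma PosSemidef.norm_apply_sq_le {W : Matrix n n ℂ} (hW : W.PosSemidef) (x y : n) :
    ‖W x y‖ ^ 2 ≤ (W x x).re * (W y y).re := by
  have hdet := (hW.submatrix ![x, y]).det_nonneg
  rw [det_fin_two] at hdet
  simp only [submatrix_apply, cons_val_zero, cons_val_one] at hdet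
  rw [← hW.1.apply y x] at hdet
  have hx := (Complex.nonneg_iff.mp (hW.diag_nonneg (i := x))).2
  have hy := (Complex.nonneg_iff.mp (hW.diag_nonneg (i := y))).2
  have hre := (Complex.nonneg_iff.mp hdet).1
  simp only [RCLike.star_def, Complex.sub_re, Complex.mul_re, ← hx, ← hy, mul_zero, sub_zero,
    Complex.conj_re, Complex.conj_im, mul_neg, sub_neg_eq_add, sub_nonneg] at hre
  rw [Complex.sq_norm, Complex.normSq_apply]
  linarith

variable [Fintype n]

lemma PosSemidef.trace_mul_nonneg {A B : Matrix n n ℂ} (hA : A.PosSemidef)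
    (hB : B.PosSemidef) : 0 ≤ (A * B).trace := by
  convert (hA.hadamard hB.transpose).dotProduct_mulVec_nonneg 1 using 1
  simp [trace, mul_apply, dotProduct, mulVec, Finset.mul_sum]

lemma PosSemidef.norm_apply_le_re_trace {W : Matrix n n ℂ} (hW : W.PosSemidef) (x y : n) :
    ‖W x y‖ ≤ W.trace.re := by
  have hdiag (z : n) : 0 ≤ (W z z).re := (Complex.nonneg_iff.mp (hW.diag_nonneg (i := z))).1
  have hle (z : n) : (W z z).re ≤ W.trace.re := by
    rw [trace, Complex.re_sum]
    exact Finset.single_le_sum (f := fun i => (W i i).re) (fun i _ => hdiag i)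
      (Finset.mem_univ z)
  have htr : 0 ≤ W.trace.re := (hdiag x).trans (hle x)
  refine (pow_le_pow_iff_left₀ (norm_nonneg _) htr two_ne_zero).mp ?_
  calc ‖W x y‖ ^ 2 ≤ (W x x).re * (W y y).re := hW.norm_apply_sq_le x y
    _ ≤ W.trace.re ^ 2 := by rw [sq]; exact mul_le_mul (hle x) (hle y) (hdiag y) htr

lemma PosSemidef.re_trace_mul_le {W : Matrix n n ℂ} (hW : W.PosSemidef) (C : Matrix n n ℂ) :
    (C * W).trace.re ≤ (∑ p, ∑ q, ‖C p q‖) * W.trace.re := by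
  calc (C * W).trace.re ≤ ‖(C * W).trace‖ := Complex.re_le_norm _
    _ ≤ ∑ p, ∑ q, ‖C p q‖ * ‖W q p‖ := by
      simp only [trace, diag, mul_apply, ← norm_mul]
      exact (norm_sum_le _ _).trans (Finset.sum_le_sum fun p _ => norm_sum_le _ _)
    _ ≤ ∑ p, ∑ q, ‖C p q‖ * W.trace.re := by
      gcongr with p _ q _
      exact hW.norm_apply_le_re_trace q p
    _ = (∑ p, ∑ q, ‖C p q‖) * W.trace.re := by simp only [Finset.sum_mul]

end Matrix

lemma ptraceSnd_kronecker {m n : Type*} [Fintype n] (A : Matrix m m ℂ) (B : Matrix n n ℂ) :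
    ptraceSnd (A ⊗ₖ B) = B.trace • A := by
  ext a a'
  simp [ptraceSnd, trace, Finset.mul_sum, mul_comm]

lemma ptraceFst_kronecker {m n : Type*} [Fintype m] (A : Matrix m m ℂ) (B : Matrix n n ℂ) :
    ptraceFst (A ⊗ₖ B) = A.trace • B := by
  ext b b'
  simp [ptraceFst, trace, Finset.sum_mul]

lemma IsDensity.nonempty {n : Type*} [Fintype n] [DecidableEq n] {ρ : Matrix n n ℂ}
    (hρ : IsDensity ρ) : Nonempty n := by
  by_contra h
  have htr := hρ.2
  simp [trace, not_nonempty_iff.mp h] at htr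

def krausMap {m n ι : Type*} [Fintype m] [Fintype n] [Fintype ι] (K : ι → Matrix m n ℂ) :
    Matrix n n ℂ →ₗ[ℂ] Matrix m m ℂ where
  toFun x := ∑ i, K i * x * (K i)ᴴ
  map_add' x y := by simp only [Matrix.mul_add, Matrix.add_mul, Finset.sum_add_distrib]
  map_smul' c x := by simp only [Matrix.mul_smul, Matrix.smul_mul, Finset.smul_sum,
    RingHom.id_apply]

lemma choi_krausMap {dA dB : ℕ} {ι : Type*} [Fintype ι] (K : ι → Matrix (Fin dB) (Fin dA) ℂ) :
    choi (krausMap K) =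
      (dA : ℂ)⁻¹ • ∑ i, vecMulVec (fun p => K i p.2 p.1) (star fun p => K i p.2 p.1) := by
  ext ⟨a, b⟩ ⟨a', b'⟩
  simp [choi, krausMap, kroneckerMap_apply, Matrix.sum_apply, single_apply, mul_apply,
    vecMulVec_apply, ite_and, Finset.mul_sum]

lemma choi_krausMap_posSemidef {dA dB : ℕ} {ι : Type*} [Fintype ι]
    (K : ι → Matrix (Fin dB) (Fin dA) ℂ) : (choi (krausMap K)).PosSemidef := by
  rw [choi_krausMap]
  refine .smul (posSemidef_sum _ fun i _ => posSemidef_vecMulVec_self_star _) ?_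
  simp [Nat.cast_nonneg]

lemma trace_choi_mul_transpose_kronecker {dA dB : ℕ}
    (Φ : Matrix (Fin dA) (Fin dA) ℂ →ₗ[ℂ] Matrix (Fin dB) (Fin dB) ℂ)
    (ρ : Matrix (Fin dA) (Fin dA) ℂ) (M : Matrix (Fin dB) (Fin dB) ℂ) :
    (choi Φ * (ρᵀ ⊗ₖ M)).trace = (dA : ℂ)⁻¹ * (M * Φ ρ).trace := by
  rw [choi, Matrix.smul_mul, trace_smul, smul_eq_mul]
  congr 1
  conv_rhs => rw [matrix_eq_sum_single ρ]
  simp only [Matrix.sum_mul, trace_sum, ← mul_kronecker_mul, trace_kronecker, map_sum,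
    Matrix.mul_sum]
  refine Finset.sum_congr rfl fun i _ => Finset.sum_congr rfl fun j _ => ?_
  rw [show single i j (ρ i j) = ρ i j • single i j (1 : ℂ) by
      rw [smul_single, smul_eq_mul, mul_one],
    map_smul, Matrix.mul_smul, trace_smul, smul_eq_mul, trace_single_mul, trace_mul_comm,
    one_smul, transpose_apply]

def psuccValues {dA dB : ℕ} (Φ : Matrix (Fin dA) (Fin dA) ℂ → Matrix (Fin dB) (Fin dB) ℂ)
    (k : ℕ) : Set ℝ :=
  {r : ℝ | ∃ (M : Fin k → Matrix (Fin dB) (Fin dB) ℂ)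
      (ρ : Fin k → Matrix (Fin dA) (Fin dA) ℂ),
    (∀ i, (M i).PosSemidef) ∧ (∑ i, M i = 1) ∧ (∀ i, IsDensity (ρ i)) ∧
    r = (1 / (k : ℝ)) * ∑ i, ((M i * Φ (ρ i)).trace).re}

def sdpOneValues {dA dB : ℕ} (Φ : Matrix (Fin dA) (Fin dA) ℂ → Matrix (Fin dB) (Fin dB) ℂ)
    (k : ℕ) : Set ℝ :=
  {r : ℝ | ∃ W : Fin k → Fin k → Matrix (Fin dA × Fin dB) (Fin dA × Fin dB) ℂ,
    (∀ i j, (W i j).PosSemidef) ∧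
    (∑ i, ∑ j, (W i j).trace) = (k : ℂ) * (dB : ℂ) ∧
    (∀ i, ∑ j, W i j
      = (∑ j, ptraceSnd (W i j)) ⊗ₖ ((dB : ℂ)⁻¹ • (1 : Matrix (Fin dB) (Fin dB) ℂ))) ∧
    (∀ i j, ptraceFst (W i j) = (k : ℂ)⁻¹ • ∑ l, ptraceFst (W l j)) ∧
    r = ((dA : ℝ) / (k : ℝ)) * ∑ i, ((choi Φ * W i i).trace).re}

lemma sdpOneValues_bddAbove {dA dB : ℕ}
    (Φ : Matrix (Fin dA) (Fin dA) ℂ → Matrix (Fin dB) (Fin dB) ℂ) (k : ℕ) :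
    BddAbove (sdpOneValues Φ k) := by
  refine ⟨(dA / k) * ((∑ p, ∑ q, ‖choi Φ p q‖) * (k * dB)), ?_⟩
  rintro r ⟨W, hW, htr, -, -, rfl⟩
  have hsum : ∑ i, ∑ j, (W i j).trace.re = k * dB := by
    simpa [← Complex.re_sum] using congrArg Complex.re htr
  gcongr
  calc ∑ i, (choi Φ * W i i).trace.re ≤ ∑ i, (∑ p, ∑ q, ‖choi Φ p q‖) * (W i i).trace.re :=
        Finset.sum_le_sum fun i _ => (hW i i).re_trace_mul_le _
    _ ≤ ∑ i, (∑ p, ∑ q, ‖choi Φ p q‖) * ∑ j, (W i j).trace.re := by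
        gcongr with i
        exact Finset.single_le_sum (f := fun j => (W i j).trace.re)
          (fun j _ => (Complex.nonneg_iff.mp (hW i j).trace_nonneg).1) (Finset.mem_univ i)
    _ = _ := by rw [← Finset.mul_sum, hsum]

lemma sdpOneValues_nonneg {dA dB : ℕ} {ι : Type*} [Fintype ι]
    (K : ι → Matrix (Fin dB) (Fin dA) ℂ) (k : ℕ) :
    ∀ r ∈ sdpOneValues (krausMap K) k, 0 ≤ r := by
  rintro r ⟨W, hW, -, -, -, rfl⟩
  refine mul_nonneg (by positivity) (Finset.sum_nonneg fun i _ => ?_)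
  exact (Complex.nonneg_iff.mp ((choi_krausMap_posSemidef K).trace_mul_nonneg (hW i i))).1

lemma psuccValues_subset_sdpOneValues {dA dB : ℕ}
    (Φ : Matrix (Fin dA) (Fin dA) ℂ →ₗ[ℂ] Matrix (Fin dB) (Fin dB) ℂ) (k : ℕ) :
    psuccValues Φ k ⊆ sdpOneValues Φ k := by
  rintro r ⟨M, ρ, hM, hMsum, hρ, rfl⟩
  have htrM : ∑ j, (M j).trace = dB := by
    rw [← trace_sum, hMsum, trace_one, Fintype.card_fin]
  refine ⟨fun i j => (ρ i)ᵀ ⊗ₖ M j, fun i j => (hρ i).1.transpose.kronecker (hM j),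
    ?trace, ?ptraceSnd, ?ptraceFst, ?value⟩
  case trace => simp [trace_kronecker, (hρ _).2, htrM]
  case ptraceSnd =>
    intro i
    rcases eq_or_ne dB 0 with rfl | hdB
    · exact Subsingleton.elim _ _
    simp only [ptraceSnd_kronecker, ← Finset.sum_smul, htrM, smul_kronecker, kronecker_smul,
      smul_smul]
    rw [inv_mul_cancel₀ (Nat.cast_ne_zero.mpr hdB), one_smul, ← hMsum]
    exact (map_sum (kroneckerBilinear (R := ℂ) (ρ i)ᵀ) M _).symm
  case ptraceFst =>
    intro i j
    have hk : (k : ℂ) ≠ 0 := Nat.cast_ne_zero.mpr (Fin.pos i).ne'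
    simp only [ptraceFst_kronecker, trace_transpose, (hρ _).2, one_smul, Finset.sum_const,
      Finset.card_univ, Fintype.card_fin, ← Nat.cast_smul_eq_nsmul ℂ, smul_smul,
      inv_mul_cancel₀ hk]
  case value =>
    have hterm (i : Fin k) :
        (M i * Φ (ρ i)).trace.re = dA * (choi Φ * ((ρ i)ᵀ ⊗ₖ M i)).trace.re := by
      have hdA : (dA : ℂ) ≠ 0 :=
        Nat.cast_ne_zero.mpr (Fin.pos_iff_nonempty.mpr (hρ i).nonempty).ne'
      rw [trace_choi_mul_transpose_kronecker, ← Complex.re_ofReal_mul, Complex.ofReal_natCast,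
        mul_inv_cancel_left₀ hdA]
    simp only [hterm, ← Finset.mul_sum]
    ring

theorem psucc_le_sdp_one_general {dA dB k : ℕ} {ι : Type} [Fintype ι]
    (K : ι → Matrix (Fin dB) (Fin dA) ℂ)
    (Φ : Matrix (Fin dA) (Fin dA) ℂ → Matrix (Fin dB) (Fin dB) ℂ)
    (hΦ : ∀ x, Φ x = ∑ i, K i * x * (K i)ᴴ) :
    Psucc Φ k ≤ sSup {r : ℝ |
      ∃ W : Fin k → Fin k → Matrix (Fin dA × Fin dB) (Fin dA × Fin dB) ℂ,
        (∀ i j, (W i j).PosSemidef) ∧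
        (∑ i, ∑ j, (W i j).trace) = (k : ℂ) * (dB : ℂ) ∧
        (∀ i, ∑ j, W i j
          = (∑ j, ptraceSnd (W i j)) ⊗ₖ
              ((dB : ℂ)⁻¹ • (1 : Matrix (Fin dB) (Fin dB) ℂ))) ∧
        (∀ i j, ptraceFst (W i j) = (k : ℂ)⁻¹ • ∑ l, ptraceFst (W l j)) ∧
        r = ((dA : ℝ) / (k : ℝ)) * ∑ i, ((choi Φ * W i i).trace).re} := by
  obtain rfl : Φ = krausMap K := funext hΦ
  change sSup (psuccValues _ k) ≤ sSup (sdpOneValues _ k)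
  -- `Real.sSup_le` also asks for `0 ≤ sSup`: the set of codes is empty if `dA = 0`, say.
  exact Real.sSup_le
    (fun r hr => le_csSup (sdpOneValues_bddAbove _ k) (psuccValues_subset_sdpOneValues _ k hr))
    (Real.sSup_nonneg (sdpOneValues_nonneg K k))

/-- the first level `SDP₁(Φ,k)` of the hierarchy upper bounds
`P_succ(Φ,k)`. -/
theorem psucc_le_sdp_one {dA dB k : ℕ} {ι : Type} [Fintype ι]
    (hk : 1 ≤ k)
    (K : ι → Matrix (Fin dB) (Fin dA) ℂ)
    (hK : ∑ i, (K i)ᴴ * K i = 1)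
    (Φ : Matrix (Fin dA) (Fin dA) ℂ → Matrix (Fin dB) (Fin dB) ℂ)
    (hΦ : ∀ x, Φ x = ∑ i, K i * x * (K i)ᴴ) :
    Psucc Φ k ≤ sSup {r : ℝ |
      ∃ W : Fin k → Fin k → Matrix (Fin dA × Fin dB) (Fin dA × Fin dB) ℂ,
        (∀ i j, (W i j).PosSemidef) ∧
        (∑ i, ∑ j, (W i j).trace) = (k : ℂ) * (dB : ℂ) ∧
        (∀ i, ∑ j, W i j
          = (∑ j, ptraceSnd (W i j)) ⊗ₖ
              ((dB : ℂ)⁻¹ • (1 : Matrix (Fin dB) (Fin dB) ℂ))) ∧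
        (∀ i j, ptraceFst (W i j) = (k : ℂ)⁻¹ • ∑ l, ptraceFst (W l j)) ∧
        r = ((dA : ℝ) / (k : ℝ)) * ∑ i, ((choi Φ * W i i).trace).re} :=
  psucc_le_sdp_one_general K Φ hΦ
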